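/- arXiv:1407.3363 — 7 statements merged into one kernel-verified Lean document; each statement's English description precedes it below -/
import Mathlib

section
/- For any graph G of order n with maximum degree Δ ≥ k and minimum degree δ ≥ k−1, the Roman k-tuple domination number satisfies γ_{×kR}(G) ≥ 2n/(Δ/k + 1). -/
open Finset

/-- A Roman k-tuple dominating function: values in {0,1,2}; vertices with value 0
have at least k neighbors with value 2; vertices with nonzero value have at least
k-1 neighbors with value 2. -/
def IsRkTDF {V : Type*} (G : SimpleGraph V) (k : ℕ) (f : V → ℕ) : Prop :=
  (∀ v, f v ≤ 2) ∧
  (∀ v, f v = 0 → k ≤ {w | G.Adj v w ∧ f w = 2}.ncard) ∧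
  (∀ v, f v ≠ 0 → k - 1 ≤ {w | G.Adj v w ∧ f w = 2}.ncard)

/-- The Roman k-tuple domination number: minimum weight of a Roman k-tuple
dominating function. -/
noncomputable def romanKTDN {V : Type*} [Fintype V] (G : SimpleGraph V) (k : ℕ) : ℕ :=
  sInf {n | ∃ f : V → ℕ, IsRkTDF G k f ∧ ∑ v, f v = n}

/-- A k-tuple dominating set: every vertex has at least k members of S in its
closed neighborhood. -/
def IsKTupleDomSet {V : Type*} (G : SimpleGraph V) (k : ℕ) (S : Set V) : Prop :=
  ∀ v, k ≤ {w ∈ S | w = v ∨ G.Adj v w}.ncard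

/-- The k-tuple domination number. -/
noncomputable def kTupleDomNum {V : Type*} (G : SimpleGraph V) (k : ℕ) : ℕ :=
  sInf {n | ∃ S : Set V, IsKTupleDomSet G k S ∧ S.ncard = n}

/-!
Take a Roman k-tuple dominating function `f` of minimum weight and count the pairs `(v, w)` with
`w` adjacent to `v` and `f w = 2`. Every vertex `v` lies in at least `k - [f v ≠ 0]` such pairs
as the first entry, and every `w` with `f w = 2` in at most `Δ` as the second, so
`k n ≤ Δ n₂ + n₁ + n₂`, where `nᵢ` counts the vertices of value `i`. Since the weight of `f` is
`n₁ + 2 n₂`, `k ≥ 1` and `Δ + k ≥ 2`, this gives `2 k n ≤ (Δ + k) · γ_{×kR}(G)`.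
-/

open SimpleGraph

section

variable {V : Type*} {G : SimpleGraph V} {k Δ : ℕ} {f : V → ℕ}

lemma isRkTDF_const_two (hδ : ∀ v, k - 1 ≤ (G.neighborSet v).ncard) :
    IsRkTDF G k fun _ => 2 :=
  ⟨fun _ => le_rfl, fun _ h => absurd h two_ne_zero, fun v _ => by simpa [neighborSet] using hδ v⟩

lemma exists_isRkTDF_sum_eq_romanKTDN [Fintype V] (hδ : ∀ v, k - 1 ≤ (G.neighborSet v).ncard) :
    ∃ f, IsRkTDF G k f ∧ ∑ v, f v = romanKTDN G k :=
  Nat.sInf_mem (s := {n | ∃ f : V → ℕ, IsRkTDF G k f ∧ ∑ v, f v = n})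
    ⟨_, _, isRkTDF_const_two hδ, rfl⟩

lemma SimpleGraph.degree_le_sSup_ncard_neighborSet [Fintype V] [DecidableRel G.Adj] (v : V) :
    G.degree v ≤ sSup {d | ∃ v, (G.neighborSet v).ncard = d} := by
  have hncard : ∀ v, (G.neighborSet v).ncard = G.degree v := fun v => by
    rw [Set.ncard_eq_toFinset_card', ← card_neighborSet_eq_degree, Set.toFinset_card]
  refine le_csSup ⟨Fintype.card V, ?_⟩ ⟨v, hncard v⟩
  rintro _ ⟨w, rfl⟩
  rw [hncard]
  exact (G.neighborFinset w).card_le_univ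

variable [Fintype V] [DecidableRel G.Adj]

lemma SimpleGraph.sum_card_adj_filter_eq_sum_degree (p : V → Prop) [DecidablePred p] :
    ∑ v, #{w | G.Adj v w ∧ p w} = ∑ w with p w, G.degree w := by
  have := sum_card_bipartiteAbove_eq_sum_card_bipartiteBelow (s := univ) (t := univ.filter p) G.Adj
  simp only [bipartiteAbove, bipartiteBelow, filter_filter] at this
  convert this using 3
  · exact filter_congr fun _ _ => and_comm
  · rw [← card_neighborFinset_eq_degree, neighborFinset_eq_filter]
    exact congrArg card (filter_congr fun _ _ => G.adj_comm _ _)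

lemma IsRkTDF.le_card_adj_two_add (hf : IsRkTDF G k f) (v : V) :
    k ≤ #{w | G.Adj v w ∧ f w = 2} + if f v = 0 then 0 else 1 := by
  have hcard : {w | G.Adj v w ∧ f w = 2}.ncard = #{w | G.Adj v w ∧ f w = 2} := by
    rw [Set.ncard_eq_toFinset_card', Set.toFinset_ofPred]
  split_ifs with h
  · exact hcard ▸ hf.2.1 v h
  · have := hcard ▸ hf.2.2 v h
    omega

lemma IsRkTDF.mul_card_le (hf : IsRkTDF G k f) (hdeg : ∀ v, G.degree v ≤ Δ) :
    k * Fintype.card V ≤ ∑ v, ((if f v = 2 then Δ else 0) + if f v = 0 then 0 else 1) := by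
  calc k * Fintype.card V = ∑ _v : V, k := by simp [mul_comm]
    _ ≤ ∑ v, (#{w | G.Adj v w ∧ f w = 2} + if f v = 0 then 0 else 1) :=
      sum_le_sum fun v _ => hf.le_card_adj_two_add v
    _ = ∑ w with f w = 2, G.degree w + ∑ v, if f v = 0 then 0 else 1 := by
      rw [sum_add_distrib, sum_card_adj_filter_eq_sum_degree]
    _ ≤ ∑ w with f w = 2, Δ + ∑ v, if f v = 0 then 0 else 1 := by
      gcongr with w; exact hdeg w
    _ = _ := by rw [sum_filter, ← sum_add_distrib]

lemma IsRkTDF.two_mul_mul_card_le (hf : IsRkTDF G k f) (hk : 1 ≤ k) (hΔk : 2 ≤ Δ + k)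
    (hdeg : ∀ v, G.degree v ≤ Δ) :
    2 * k * Fintype.card V ≤ (Δ + k) * ∑ v, f v := by
  -- a vertex of value 1 costs 2 ≤ Δ + k, one of value 2 costs 2Δ + 2 ≤ 2(Δ + k)
  have hcharge :
      ∀ v, 2 * ((if f v = 2 then Δ else 0) + if f v = 0 then 0 else 1) ≤ (Δ + k) * f v := by
    intro v
    have := hf.1 v
    interval_cases f v <;> simp <;> omega
  calc 2 * k * Fintype.card V = 2 * (k * Fintype.card V) := mul_assoc _ _ _
    _ ≤ 2 * ∑ v, ((if f v = 2 then Δ else 0) + if f v = 0 then 0 else 1) :=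
      Nat.mul_le_mul_left 2 (hf.mul_card_le hdeg)
    _ ≤ (Δ + k) * ∑ v, f v := by
      rw [mul_sum, mul_sum]; exact sum_le_sum fun v _ => hcharge v

end

theorem stmt0 {V : Type*} [Fintype V] (G : SimpleGraph V) (k Δ : ℕ)
    (hk : 1 ≤ k)
    (hΔ : Δ = sSup {d | ∃ v : V, (G.neighborSet v).ncard = d})
    (hΔk : k ≤ Δ)
    (hδ : ∀ v : V, k - 1 ≤ (G.neighborSet v).ncard) :
    (2 * (Fintype.card V : ℝ)) / ((Δ : ℝ) / (k : ℝ) + 1) ≤ (romanKTDN G k : ℝ) := by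
  classical
  obtain ⟨f, hf, hweight⟩ := exists_isRkTDF_sum_eq_romanKTDN hδ
  have key : 2 * k * Fintype.card V ≤ (Δ + k) * romanKTDN G k :=
    hweight ▸ hf.two_mul_mul_card_le hk (by omega) fun v => hΔ ▸ degree_le_sSup_ncard_neighborSet v
  have hk' : (0 : ℝ) < k := by exact_mod_cast hk
  rw [div_add_one hk'.ne', div_div_eq_mul_div, div_le_iff₀ (by positivity)]
  have : (2 * k * Fintype.card V : ℝ) ≤ (Δ + k) * romanKTDN G k := by exact_mod_cast key
  linarith
end

section
/- If k ≥ 2 and G is a (k−1)-regular graph of order n, then γ_{×kR}(G) = 2n. -/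
/-! In a `(k - 1)`-regular graph no vertex can take the value `0`, since it has only `k - 1`
neighbours; a vertex with nonzero value then needs all of its `k - 1` neighbours to take the
value `2`. As `k ≥ 2`, every vertex has a neighbour, so the constant function `2` is the only
Roman `k`-tuple dominating function. -/

open Finset

lemma SimpleGraph.ncard_neighborSet_eq_degree {V : Type*} (G : SimpleGraph V) (v : V)
    [Fintype (G.neighborSet v)] : (G.neighborSet v).ncard = G.degree v := by
  rw [Set.ncard_eq_toFinset_card', Set.toFinset_card, G.card_neighborSet_eq_degree]

lemma SimpleGraph.ncard_setOf_adj_and_le_degree {V : Type*} (G : SimpleGraph V) {v : V}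
    [Fintype (G.neighborSet v)] (p : V → Prop) : {w | G.Adj v w ∧ p w}.ncard ≤ G.degree v := by
  rw [← G.ncard_neighborSet_eq_degree]
  exact Set.ncard_le_ncard (fun _ hw => hw.1)

namespace IsRkTDF

variable {V : Type*} {G : SimpleGraph V} {k : ℕ} {f : V → ℕ}

lemma ne_zero_of_degree_lt (hf : IsRkTDF G k f) (v : V) [Fintype (G.neighborSet v)]
    (hv : G.degree v < k) : f v ≠ 0 := fun h0 =>
  (hv.trans_le (hf.2.1 v h0)).not_ge (G.ncard_setOf_adj_and_le_degree _)

lemma eq_two_of_adj (hf : IsRkTDF G k f) {v w : V} [Fintype (G.neighborSet v)]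
    (hv : G.degree v = k - 1) (hvw : G.Adj v w) : f w = 2 := by
  have hpos : 0 < G.degree v := G.degree_pos_iff_exists_adj v |>.mpr ⟨w, hvw⟩
  have hfv : f v ≠ 0 := hf.ne_zero_of_degree_lt v (by omega)
  have hfull : {u | G.Adj v u ∧ f u = 2} = G.neighborSet v := by
    refine Set.eq_of_subset_of_ncard_le (fun _ hu => hu.1) ?_ (Set.toFinite _)
    rw [G.ncard_neighborSet_eq_degree, hv]
    exact hf.2.2 v hfv
  exact (hfull ▸ hvw : w ∈ {u | G.Adj v u ∧ f u = 2}).2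

end IsRkTDF

lemma isRkTDF_const_two_s3 {V : Type*} {G : SimpleGraph V} [G.LocallyFinite] {k : ℕ}
    (hdeg : ∀ v, k - 1 ≤ G.degree v) : IsRkTDF G k fun _ => 2 := by
  refine ⟨fun _ => le_rfl, fun _ h => absurd h two_ne_zero, fun v _ => ?_⟩
  simp only [and_true]
  exact G.ncard_neighborSet_eq_degree v ▸ hdeg v

lemma SimpleGraph.IsRegularOfDegree.isRkTDF_iff {V : Type*} {G : SimpleGraph V}
    [G.LocallyFinite] {k : ℕ} (hk : 2 ≤ k) (hreg : G.IsRegularOfDegree (k - 1))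
    {f : V → ℕ} : IsRkTDF G k f ↔ f = fun _ => 2 := by
  refine ⟨fun hf => funext fun v => ?_, fun h => h ▸ isRkTDF_const_two_s3 fun v => (hreg v).ge⟩
  obtain ⟨w, hvw⟩ := (G.degree_pos_iff_exists_adj v).mp (by rw [hreg v]; omega)
  exact hf.eq_two_of_adj (hreg w) hvw.symm

theorem stmt3_general {V : Type*} [Fintype V] (G : SimpleGraph V)
    [DecidableRel G.Adj] (k : ℕ) (hk : 2 ≤ k)
    (hreg : G.IsRegularOfDegree (k - 1)) :
    romanKTDN G k = 2 * Fintype.card V := by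
  have hweights : {n | ∃ f : V → ℕ, IsRkTDF G k f ∧ ∑ v, f v = n} = {2 * Fintype.card V} := by
    ext n
    simp only [hreg.isRkTDF_iff hk, exists_eq_left, Finset.sum_const, Finset.card_univ,
      smul_eq_mul, Set.mem_ofPred_eq, Set.mem_singleton_iff, mul_comm, eq_comm]
  rw [romanKTDN, hweights, csInf_singleton]

theorem stmt3 {V : Type*} [Fintype V] [DecidableEq V] (G : SimpleGraph V)
    [DecidableRel G.Adj] (k : ℕ) (hk : 2 ≤ k)
    (hreg : G.IsRegularOfDegree (k - 1)) :
    romanKTDN G k = 2 * Fintype.card V :=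
  stmt3_general G k hk hreg
end

section
/- A graph G with δ(G) ≥ k−1 satisfies γ_{×kR}(G) = 2γ_{×k}(G) (i.e., G is a k-tuple Roman graph) if and only if G has a minimum-weight Roman k-tuple dominating function f = (V_0, V_1, V_2) with V_1 = ∅. -/
open Finset

/-!
On functions with values in `{0, 2}` the Roman `k`-tuple conditions at `v` say exactly that
the set `S` of vertices of value `2` meets the closed neighbourhood of `v` in at least `k`
vertices (the `k - 1` for `v ∈ S` is made up by `v` itself), and the weight is `2 |S|`.
So `2 • 1_S` for a minimum `k`-tuple dominating set `S` always gives `γ_{×kR} ≤ 2 γ_{×k}`,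
with equality exactly when some minimum Roman function takes no value `1`.
-/

namespace SimpleGraph

variable {V : Type*} {G : SimpleGraph V} {k : ℕ}

lemma ncard_sep_eq_or_adj_of_mem [Finite V] {S : Set V} {v : V} (hv : v ∈ S) :
    {w ∈ S | w = v ∨ G.Adj v w}.ncard = {w | G.Adj v w ∧ w ∈ S}.ncard + 1 := by
  have : {w ∈ S | w = v ∨ G.Adj v w} = insert v {w | G.Adj v w ∧ w ∈ S} := by
    ext w; by_cases hw : w = v <;> aesop
  rw [this, Set.ncard_insert_of_notMem (by simp)]

lemma ncard_sep_eq_or_adj_of_notMem {S : Set V} {v : V} (hv : v ∉ S) :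
    {w ∈ S | w = v ∨ G.Adj v w}.ncard = {w | G.Adj v w ∧ w ∈ S}.ncard := by
  congr 1; ext w; by_cases hw : w = v <;> aesop

lemma isRkTDF_iff_isKTupleDomSet [Finite V] {f : V → ℕ} (h2 : ∀ v, f v ≤ 2)
    (h1 : ∀ v, f v ≠ 1) : IsRkTDF G k f ↔ IsKTupleDomSet G k {v | f v = 2} := by
  have hf : ∀ v, f v = 0 ∨ f v = 2 := fun v => by have := h2 v; have := h1 v; omega
  have hcard : ∀ v, {w ∈ {u | f u = 2} | w = v ∨ G.Adj v w}.ncard =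
      {w | G.Adj v w ∧ f w = 2}.ncard + if f v = 2 then 1 else 0 := fun v => by
    split_ifs with hv
    · exact ncard_sep_eq_or_adj_of_mem (S := {u | f u = 2}) hv
    · exact ncard_sep_eq_or_adj_of_notMem (S := {u | f u = 2}) hv
  unfold IsKTupleDomSet
  simp only [hcard]
  refine ⟨fun ⟨_, h0, hpos⟩ v => ?_, fun h => ⟨h2, fun v hv => ?_, fun v hv => ?_⟩⟩
  · rcases hf v with hv | hv
    · simpa [hv] using h0 v hv
    · have := hpos v (by omega); simp only [hv, if_true]; omega
  · simpa [hv] using h v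
  · have := h v; simp only [(hf v).resolve_left hv, if_true] at this; omega

lemma sum_eq_two_mul_ncard [Fintype V] {f : V → ℕ} (h2 : ∀ v, f v ≤ 2)
    (h1 : ∀ v, f v ≠ 1) :
    ∑ v, f v = 2 * {v | f v = 2}.ncard := by
  classical
  have hf : ∀ v, f v = if f v = 2 then 2 else 0 := fun v => by
    have := h2 v; have := h1 v; split_ifs <;> omega
  rw [Finset.sum_congr rfl fun v _ => hf v, Finset.sum_ite, Finset.sum_const_zero,
    Finset.sum_const, smul_eq_mul, Set.ncard_eq_toFinset_card', Set.toFinset_ofPred, mul_comm]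
  simp

lemma isKTupleDomSet_univ [Finite V] (hδ : ∀ v : V, k - 1 ≤ (G.neighborSet v).ncard) :
    IsKTupleDomSet G k Set.univ := by
  intro v
  have : {w ∈ (Set.univ : Set V) | w = v ∨ G.Adj v w} = insert v (G.neighborSet v) := by
    ext w; simp
  rw [this, Set.ncard_insert_of_notMem (by simp)]
  have := hδ v; omega

lemma exists_isKTupleDomSet_ncard_eq [Finite V]
    (hδ : ∀ v : V, k - 1 ≤ (G.neighborSet v).ncard) :
    ∃ S, IsKTupleDomSet G k S ∧ S.ncard = kTupleDomNum G k :=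
  Nat.sInf_mem (s := {n | ∃ S : Set V, IsKTupleDomSet G k S ∧ S.ncard = n})
    ⟨_, Set.univ, isKTupleDomSet_univ hδ, rfl⟩

lemma kTupleDomNum_le_ncard {S : Set V} (hS : IsKTupleDomSet G k S) :
    kTupleDomNum G k ≤ S.ncard :=
  Nat.sInf_le ⟨S, hS, rfl⟩

lemma romanKTDN_le_sum [Fintype V] {f : V → ℕ} (hf : IsRkTDF G k f) :
    romanKTDN G k ≤ ∑ v, f v :=
  Nat.sInf_le ⟨f, hf, rfl⟩

lemma exists_isRkTDF_sum_eq_two_mul_kTupleDomNum [Fintype V]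
    (hδ : ∀ v : V, k - 1 ≤ (G.neighborSet v).ncard) :
    ∃ g : V → ℕ, IsRkTDF G k g ∧ ∑ v, g v = 2 * kTupleDomNum G k ∧ ∀ v, g v ≠ 1 := by
  classical
  obtain ⟨S, hS, hScard⟩ := exists_isKTupleDomSet_ncard_eq hδ
  set g : V → ℕ := fun v => if v ∈ S then 2 else 0
  have hg2 : ∀ v, g v ≤ 2 := fun v => by simp only [g]; split_ifs <;> omega
  have hg1 : ∀ v, g v ≠ 1 := fun v => by simp only [g]; split_ifs <;> omega
  have hgS : {v | g v = 2} = S := by ext v; simp [g]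
  refine ⟨g, ?_, ?_, hg1⟩
  · rwa [isRkTDF_iff_isKTupleDomSet hg2 hg1, hgS]
  · rw [sum_eq_two_mul_ncard hg2 hg1, hgS, hScard]

lemma two_mul_kTupleDomNum_le_sum [Fintype V] {f : V → ℕ} (hf : IsRkTDF G k f)
    (h1 : ∀ v, f v ≠ 1) : 2 * kTupleDomNum G k ≤ ∑ v, f v := by
  rw [sum_eq_two_mul_ncard hf.1 h1]
  exact Nat.mul_le_mul_left 2
    (kTupleDomNum_le_ncard ((isRkTDF_iff_isKTupleDomSet hf.1 h1).1 hf))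

end SimpleGraph

open SimpleGraph

theorem stmt7 {V : Type*} [Fintype V] (G : SimpleGraph V) (k : ℕ)
    (hδ : ∀ v : V, k - 1 ≤ (G.neighborSet v).ncard) :
    romanKTDN G k = 2 * kTupleDomNum G k ↔
      ∃ f : V → ℕ, IsRkTDF G k f ∧ ∑ v, f v = romanKTDN G k ∧ ∀ v, f v ≠ 1 := by
  obtain ⟨g, hg, hgsum, hg1⟩ := exists_isRkTDF_sum_eq_two_mul_kTupleDomNum hδ
  have hle : romanKTDN G k ≤ 2 * kTupleDomNum G k := hgsum ▸ romanKTDN_le_sum hg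
  constructor
  · intro h
    exact ⟨g, hg, hgsum.trans h.symm, hg1⟩
  · rintro ⟨f, hf, hfsum, hf1⟩
    exact le_antisymm hle (hfsum ▸ two_mul_kTupleDomNum_le_sum hf hf1)
end

section
/- Let f = (V_0, V_1, V_2) be any minimum-weight Roman k-tuple dominating function on a graph G with δ(G) ≥ k−1. Then the subgraph of G induced by V_1 has maximum degree at most 1. -/
open Finset

/-! Promoting a vertex `v ∈ V₁` to `2` and demoting all its neighbours in `V₁` to `0` yields again a
Roman `k`-tuple dominating function: each demoted neighbour gains `v` as a new neighbour in `V₂`,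
so its `k - 1` neighbours in `V₂` become `k`. The weight changes by `1 - |N(v) ∩ V₁|`, so
minimality forces `|N(v) ∩ V₁| ≤ 1`. -/

section Promote

variable {V : Type*} {G : SimpleGraph V} {k : ℕ} {f : V → ℕ} {v : V}

open Classical in
noncomputable def promoteAt (G : SimpleGraph V) (f : V → ℕ) (v : V) : V → ℕ :=
  fun u => if u = v then 2 else if G.Adj v u ∧ f u = 1 then 0 else f u

lemma promoteAt_self : promoteAt G f v v = 2 := by
  simp [promoteAt]

lemma promoteAt_eq_two_of_eq_two {u : V} (hu : f u = 2) : promoteAt G f v u = 2 := by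
  unfold promoteAt
  split_ifs <;> omega

lemma ncard_adj_eq_two_mono [Finite V] {g : V → ℕ} (hfg : ∀ w, f w = 2 → g w = 2) (u : V) :
    {w | G.Adj u w ∧ f w = 2}.ncard ≤ {w | G.Adj u w ∧ g w = 2}.ncard :=
  Set.ncard_le_ncard (fun w hw => ⟨hw.1, hfg w hw.2⟩) (Set.toFinite _)

lemma isRkTDF_promoteAt [Finite V] (hf : IsRkTDF G k f) (hv : f v = 1) :
    IsRkTDF G k (promoteAt G f v) := by
  obtain ⟨hf_le, hf_zero, hf_pos⟩ := hf
  have hmono := ncard_adj_eq_two_mono (G := G) (f := f) (g := promoteAt G f v)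
    fun _ => promoteAt_eq_two_of_eq_two
  refine ⟨fun u => ?_, fun u hu => ?_, fun u hu => ?_⟩
  · unfold promoteAt
    split_ifs <;> first | omega | exact hf_le u
  · by_cases huv : u = v
    · simp [huv, promoteAt_self] at hu
    by_cases hu₁ : G.Adj v u ∧ f u = 1
    · have hnew : v ∉ {w | G.Adj u w ∧ f w = 2} := fun h => by
        have := h.2
        omega
      have hins : insert v {w | G.Adj u w ∧ f w = 2} ⊆ {w | G.Adj u w ∧ promoteAt G f v w = 2} :=
        Set.insert_subset ⟨hu₁.1.symm, promoteAt_self⟩ fun w hw =>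
          ⟨hw.1, promoteAt_eq_two_of_eq_two hw.2⟩
      calc k ≤ {w | G.Adj u w ∧ f w = 2}.ncard + 1 := by have := hf_pos u (by omega); omega
        _ = (insert v {w | G.Adj u w ∧ f w = 2}).ncard :=
          (Set.ncard_insert_of_notMem hnew (Set.toFinite _)).symm
        _ ≤ _ := Set.ncard_le_ncard hins (Set.toFinite _)
    · have hfu : f u = 0 := by simpa [promoteAt, huv, hu₁] using hu
      exact (hf_zero u hfu).trans (hmono u)
  · have hfu : f u ≠ 0 := by
      by_cases huv : u = v
      · rw [huv, hv]; exact one_ne_zero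
      unfold promoteAt at hu
      split_ifs at hu <;> simp_all
    exact (hf_pos u hfu).trans (hmono u)

open Classical in
lemma sum_promoteAt_add_ncard [Fintype V] (hv : f v = 1) :
    ∑ u, promoteAt G f v u + {w | G.Adj v w ∧ f w = 1}.ncard = ∑ u, f u + 1 := by
  have hpoint : ∀ u, promoteAt G f v u + (if G.Adj v u ∧ f u = 1 then 1 else 0) =
      f u + (if u = v then 1 else 0) := by
    intro u
    unfold promoteAt
    by_cases huv : u = v
    · subst huv; simp [hv]
    · split_ifs <;> simp_all
  rw [Set.ncard_eq_toFinset_card', Set.toFinset_ofPred, Finset.card_filter, ← Finset.sum_add_distrib,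
    Finset.sum_congr rfl fun u _ => hpoint u, Finset.sum_add_distrib, Finset.sum_ite_eq']
  simp

lemma IsRkTDF.romanKTDN_le [Fintype V] (hf : IsRkTDF G k f) : romanKTDN G k ≤ ∑ v, f v :=
  Nat.sInf_le ⟨f, hf, rfl⟩

end Promote

theorem stmt10_general {V : Type*} [Fintype V] (G : SimpleGraph V) (k : ℕ)
    (f : V → ℕ) (hf : IsRkTDF G k f) (hmin : ∑ v, f v = romanKTDN G k) :
    ∀ v : V, f v = 1 → {w | G.Adj v w ∧ f w = 1}.ncard ≤ 1 := by
  intro v hv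
  have hweight := sum_promoteAt_add_ncard (G := G) hv
  have hle := (isRkTDF_promoteAt hf hv).romanKTDN_le
  omega

theorem stmt10 {V : Type*} [Fintype V] (G : SimpleGraph V) (k : ℕ)
    (hδ : ∀ v : V, k - 1 ≤ (G.neighborSet v).ncard)
    (f : V → ℕ) (hf : IsRkTDF G k f) (hmin : ∑ v, f v = romanKTDN G k) :
    ∀ v : V, f v = 1 → {w | G.Adj v w ∧ f w = 1}.ncard ≤ 1 :=
  stmt10_general G k f hf hmin
end

section
/- Let f = (V_0, V_1, V_2) be any minimum-weight Roman k-tuple dominating function on a graph G with δ(G) ≥ k−1. Then every vertex of V_1 is adjacent to precisely k−1 vertices of V_2. -/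
open Finset

/-! A vertex of `V₁` with `k` neighbours in `V₂` could be moved to `V₀`: no condition changes,
since `V₂` does not, and the weight drops by one, contradicting minimality. -/

theorem romanKTDN_le_sum {V : Type*} [Fintype V] {G : SimpleGraph V} {k : ℕ} {f : V → ℕ}
    (hf : IsRkTDF G k f) : romanKTDN G k ≤ ∑ v, f v :=
  Nat.sInf_le ⟨f, hf, rfl⟩

theorem setOf_adj_update_zero_eq_two {V : Type*} [DecidableEq V] (G : SimpleGraph V)
    {f : V → ℕ} {v : V} (hv : f v ≠ 2) (u : V) :
    {w | G.Adj u w ∧ Function.update f v 0 w = 2} = {w | G.Adj u w ∧ f w = 2} := by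
  ext w
  rcases eq_or_ne w v with rfl | hw
  · simp [hv]
  · simp [Function.update_of_ne hw]

theorem IsRkTDF.update_zero {V : Type*} [DecidableEq V] {G : SimpleGraph V} {k : ℕ}
    {f : V → ℕ} (hf : IsRkTDF G k f) {v : V} (hv : f v ≠ 2)
    (hk : k ≤ {w | G.Adj v w ∧ f w = 2}.ncard) : IsRkTDF G k (Function.update f v 0) := by
  obtain ⟨hle, hzero, hpos⟩ := hf
  simp only [IsRkTDF, setOf_adj_update_zero_eq_two G hv]
  refine ⟨fun u => ?_, fun u hu => ?_, fun u hu => ?_⟩ <;>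
    rcases eq_or_ne u v with rfl | huv
  · simp
  · simpa [Function.update_of_ne huv] using hle u
  · exact hk
  · exact hzero u (by simpa [Function.update_of_ne huv] using hu)
  · simp at hu
  · exact hpos u (by simpa [Function.update_of_ne huv] using hu)

theorem sum_update_zero_add {V : Type*} [Fintype V] [DecidableEq V] (f : V → ℕ) (v : V) :
    ∑ w, Function.update f v 0 w + f v = ∑ w, f w := by
  rw [Finset.sum_update_of_mem (Finset.mem_univ v), Finset.sdiff_singleton_eq_erase, zero_add,
    Finset.sum_erase_add _ _ (Finset.mem_univ v)]

theorem stmt11_general {V : Type*} [Fintype V] (G : SimpleGraph V) (k : ℕ)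
    (f : V → ℕ) (hf : IsRkTDF G k f) (hmin : ∑ v, f v = romanKTDN G k) :
    ∀ v : V, f v = 1 → {w | G.Adj v w ∧ f w = 2}.ncard = k - 1 := by
  classical
  intro v hv
  have hlower : k - 1 ≤ {w | G.Adj v w ∧ f w = 2}.ncard := hf.2.2 v (by omega)
  by_contra hne
  have hk : k ≤ {w | G.Adj v w ∧ f w = 2}.ncard := by omega
  have hsmaller := romanKTDN_le_sum (hf.update_zero (by omega) hk)
  have hsum := sum_update_zero_add f v
  omega

theorem stmt11 {V : Type*} [Fintype V] (G : SimpleGraph V) (k : ℕ)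
    (hδ : ∀ v : V, k - 1 ≤ (G.neighborSet v).ncard)
    (f : V → ℕ) (hf : IsRkTDF G k f) (hmin : ∑ v, f v = romanKTDN G k) :
    ∀ v : V, f v = 1 → {w | G.Adj v w ∧ f w = 2}.ncard = k - 1 :=
  stmt11_general G k f hf hmin
end

section
/- For the cycle C_n of order n ≥ 3, the Roman 2-tuple domination number equals 2⌈2n/3⌉. -/
open Finset

/-! Write `d v = 2 - f v` for the deficiency of a Roman 2-tuple dominating function `f` on the
cycle. Every vertex has a neighbour of value `2`, so the non-`2` values come in runs of length at
most two, and every vertex with `d v ≠ 0` is the first or second vertex of a run. Adjacent vertices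
satisfy `d v + d (v + 1) ≤ 2`, since a `0` forces both neighbours to `2`. The `2` preceding a run
needs a `2`-neighbour of its own, so run starts are at least three apart. Hence
`∑ d ≤ 2 · #runs ≤ 2 ⌊n / 3⌋`, and the pattern `2, 2, 0, 2, 2, 0, …` attains this bound. -/

open SimpleGraph
open Fin.CommRing

theorem Set.two_le_ncard_sep_pair_iff {α : Type*} {a b : α} (hab : a ≠ b) (p : α → Prop) :
    2 ≤ {x ∈ ({a, b} : Set α) | p x}.ncard ↔ p a ∧ p b := by
  classical
  rw [show {x ∈ ({a, b} : Set α) | p x} = ↑(({a, b} : Finset α).filter p) by ext; simp,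
    Set.ncard_coe_finset]
  by_cases ha : p a <;> by_cases hb : p b <;>
    simp [Finset.filter_insert, Finset.filter_singleton, ha, hb, hab]

theorem Set.one_le_ncard_sep_pair_iff {α : Type*} (a b : α) (p : α → Prop) :
    1 ≤ {x ∈ ({a, b} : Set α) | p x}.ncard ↔ p a ∨ p b := by
  classical
  rw [show {x ∈ ({a, b} : Set α) | p x} = ↑(({a, b} : Finset α).filter p) by ext; simp,
    Set.ncard_coe_finset]
  by_cases ha : p a <;> by_cases hb : p b <;>
    simp [Finset.filter_insert, Finset.filter_singleton, ha, hb]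

theorem Fin.sub_one_ne_add_one {n : ℕ} (v : Fin (n + 3)) : v - 1 ≠ v + 1 := by
  intro h
  have h2 : (2 : Fin (n + 3)) = 0 := by linear_combination -h
  exact absurd (congrArg Fin.val h2) (by rw [Fin.val_two]; simp)

theorem isRkTDF_cycleGraph_two_iff {n : ℕ} {f : Fin (n + 3) → ℕ} :
    IsRkTDF (cycleGraph (n + 3)) 2 f ↔ ∀ v, f v ≤ 2 ∧
      (f v = 0 → f (v - 1) = 2 ∧ f (v + 1) = 2) ∧ (f (v - 1) = 2 ∨ f (v + 1) = 2) := by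
  have hnbr (v : Fin (n + 3)) : {w | (cycleGraph (n + 3)).Adj v w ∧ f w = 2} =
      {w ∈ ({v - 1, v + 1} : Set (Fin (n + 3))) | f w = 2} := by
    rw [← cycleGraph_neighborSet]; rfl
  simp only [IsRkTDF, hnbr, Set.two_le_ncard_sep_pair_iff (Fin.sub_one_ne_add_one _),
    Nat.add_one_sub_one, Set.one_le_ncard_sep_pair_iff]
  constructor
  · rintro ⟨hle, hzero, hpos⟩ v
    refine ⟨hle v, hzero v, ?_⟩
    by_cases hv : f v = 0
    · exact .inl (hzero v hv).1
    · exact hpos v hv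
  · intro h
    exact ⟨fun v => (h v).1, fun v => (h v).2.1, fun v _ => (h v).2.2⟩

section Translates

variable {G : Type*} [AddGroup G] [Fintype G] [DecidableEq G]

theorem Finset.three_mul_card_le_of_add_notMem {S : Finset G} {a : G}
    (h : ∀ s ∈ S, s + a ∉ S ∧ s + a + a ∉ S) : 3 * #S ≤ Fintype.card G := by
  have hdisj₁ : Disjoint S (S.image (· + a)) := by
    simp only [Finset.disjoint_left, Finset.mem_image, not_exists, not_and]
    rintro _ hx s hs rfl
    exact (h s hs).1 hx
  have hdisj₂ : Disjoint (S ∪ S.image (· + a)) (S.image (· + a + a)) := by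
    simp only [Finset.disjoint_left, Finset.mem_union, Finset.mem_image, not_exists, not_and]
    rintro _ (hx | ⟨t, ht, hts⟩) s hs rfl
    · exact (h s hs).2 hx
    · exact (h s hs).1 (add_right_cancel hts ▸ ht)
  calc 3 * #S = #(S ∪ S.image (· + a) ∪ S.image (· + a + a)) := by
        rw [Finset.card_union_of_disjoint hdisj₂, Finset.card_union_of_disjoint hdisj₁,
          Finset.card_image_of_injective _ (add_left_injective a),
          Finset.card_image_of_injective _ fun x y hxy => by simpa using hxy]
        ring
    _ ≤ Fintype.card G := Finset.card_le_univ _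

theorem Finset.sum_le_sum_add_translate {d : G → ℕ} {S : Finset G} {a : G}
    (h : ∀ v, d v ≠ 0 → v ∈ S ∨ v - a ∈ S) : ∑ v, d v ≤ ∑ s ∈ S, (d s + d (s + a)) := by
  have hsupp : ∑ v, d v = ∑ v ∈ S ∪ S.image (· + a), d v := by
    refine (Finset.sum_subset (Finset.subset_univ _) fun v _ hv => ?_).symm
    by_contra hd
    rcases h v hd with hS | hS
    · exact hv (Finset.mem_union_left _ hS)
    · exact hv (Finset.mem_union_right _ (Finset.mem_image.2 ⟨v - a, hS, sub_add_cancel v a⟩))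
  calc ∑ v, d v ≤ ∑ v ∈ S, d v + ∑ v ∈ S.image (· + a), d v :=
        hsupp ▸ (Nat.le_add_right _ _).trans Finset.sum_union_inter.le
    _ = ∑ s ∈ S, (d s + d (s + a)) := by
        rw [Finset.sum_image fun x _ y _ => add_right_cancel, Finset.sum_add_distrib]

end Translates

theorem IsRkTDF.two_mul_sub_div_three_le_sum {n : ℕ} {f : Fin (n + 3) → ℕ}
    (hf : IsRkTDF (cycleGraph (n + 3)) 2 f) : 2 * (n + 3 - (n + 3) / 3) ≤ ∑ v, f v := by
  rw [isRkTDF_cycleGraph_two_iff] at hf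
  have hsucc (v : Fin (n + 3)) : v + 1 - 1 = v := add_sub_cancel_right v 1
  -- the first vertex of each maximal run of values `≠ 2`
  set S : Finset (Fin (n + 3)) := {s | f s ≠ 2 ∧ f (s - 1) = 2}
  have hcover (v : Fin (n + 3)) (hv : 2 - f v ≠ 0) : v ∈ S ∨ v - 1 ∈ S := by
    have hv2 : f v ≠ 2 := by omega
    have := (hf (v - 1)).2.2
    rw [sub_add_cancel] at this
    simp only [S, Finset.mem_filter, Finset.mem_univ, true_and]
    tauto
  have hpair (v : Fin (n + 3)) : 2 - f v + (2 - f (v + 1)) ≤ 2 := by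
    have := (hf v).2.1
    have := (hf (v + 1)).2.1
    rw [hsucc] at this
    omega
  have hsep (s) (hs : s ∈ S) : s + 1 ∉ S ∧ s + 1 + 1 ∉ S := by
    simp only [S, Finset.mem_filter, Finset.mem_univ, true_and, hsucc] at hs ⊢
    have := (hf (s + 1)).2.2
    rw [hsucc] at this
    tauto
  have hdef : ∑ v, (2 - f v) ≤ 2 * #S :=
    (Finset.sum_le_sum_add_translate hcover).trans
      (by simpa [mul_comm] using Finset.sum_le_card_nsmul S _ 2 fun v _ => hpair v)
  have hpack : 3 * #S ≤ n + 3 := by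
    simpa using Finset.three_mul_card_le_of_add_notMem hsep
  have htotal : ∑ v, f v + ∑ v, (2 - f v) = 2 * (n + 3) := by
    rw [← Finset.sum_add_distrib, Finset.sum_congr rfl fun v _ => Nat.add_sub_cancel' (hf v).1]
    simp [mul_comm]
  omega

def cycleRomanFun (n : ℕ) (v : Fin n) : ℕ := if 3 ∣ v.val + 1 then 0 else 2

theorem isRkTDF_cycleRomanFun (n : ℕ) : IsRkTDF (cycleGraph (n + 3)) 2 (cycleRomanFun (n + 3)) := by
  refine isRkTDF_cycleGraph_two_iff.2 fun v => ?_
  have hv := v.isLt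
  simp only [cycleRomanFun, Fin.val_add_one, Fin.coe_sub_one, Fin.ext_iff, Fin.val_zero,
    Fin.val_last]
  split_ifs <;> simp <;> omega

theorem sum_cycleRomanFun (n : ℕ) : ∑ v, cycleRomanFun n v = 2 * (n - n / 3) := by
  refine (Fin.sum_univ_eq_sum_range (fun i => if 3 ∣ i + 1 then 0 else 2) n).trans ?_
  have hcard := Finset.card_filter_add_card_filter_not (s := range n) (3 ∣ · + 1)
  rw [Nat.card_multiples, card_range] at hcard
  rw [Finset.sum_ite, Finset.sum_const_zero, Finset.sum_const, smul_eq_mul, zero_add]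
  omega

theorem romanKTDN_eq {V : Type*} [Fintype V] {G : SimpleGraph V} {k b : ℕ} {f : V → ℕ}
    (hf : IsRkTDF G k f) (hsum : ∑ v, f v = b) (hlow : ∀ g, IsRkTDF G k g → b ≤ ∑ v, g v) :
    romanKTDN G k = b :=
  le_antisymm (Nat.sInf_le ⟨f, hf, hsum⟩)
    (le_csInf ⟨b, f, hf, hsum⟩ fun _ ⟨g, hg, hg'⟩ => hg' ▸ hlow g hg)

theorem stmt17 (n : ℕ) (hn : 3 ≤ n) :
    (romanKTDN (SimpleGraph.cycleGraph n) 2 : ℤ) = 2 * ⌈(2 * n : ℚ) / 3⌉ := by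
  obtain ⟨m, rfl⟩ : ∃ m, n = m + 3 := ⟨n - 3, by omega⟩
  rw [romanKTDN_eq (isRkTDF_cycleRomanFun m) (sum_cycleRomanFun _)
    fun _ hg => hg.two_mul_sub_div_three_le_sum]
  have := Rat.ceil_natCast_div_natCast (2 * (m + 3)) 3
  push_cast at this ⊢
  rw [this]
  omega
end

section
/- For the wheel W_n of order n ≥ 4 (a cycle C_{n−1} plus a hub vertex adjacent to all cycle vertices), the Roman 2-tuple domination number equals ⌈2(n−1)/3⌉ + 2. -/
open Finset

/-- The wheel on m + 1 vertices: a cycle on m vertices together with a hub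
(the vertex `none`) adjacent to all of them. -/
def wheel (m : ℕ) : SimpleGraph (Option (Fin m)) where
  Adj x y :=
    match x, y with
    | none, none => False
    | none, some _ => True
    | some _, none => True
    | some i, some j => (SimpleGraph.cycleGraph m).Adj i j
  symm := by
    refine ⟨?_⟩
    rintro (_ | i) (_ | j) h
    · exact h
    · trivial
    · trivial
    · exact h.symm
  loopless := by
    refine ⟨?_⟩
    rintro (_ | i) h
    · exact h
    · exact SimpleGraph.irrefl _ h

/-!
Write `m` for the number of rim vertices, `a` and `c` for the numbers of rim vertices labelled
0 and 2. Every rim vertex needs two label-2 neighbours if it is labelled 0 and one otherwise;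
summing these conditions over the rim, and noting that a rim vertex labelled 2 serves at most
its two rim neighbours, gives `m + a ≤ m·[hub = 2] + 2c`. Together with the condition at the hub
this forces weight at least `⌊(2m + 2)/3⌋ + 2 = ⌈2m/3⌉ + 2`. The bound is attained by labelling
the hub and the rim vertices `1, 4, 7, …` with 2.
-/

open SimpleGraph

section Counting

variable {α : Type*} [Fintype α]

lemma ncard_setOf_option (p : Option α → Prop) [DecidablePred p] :
    {w | p w}.ncard = (if p none then 1 else 0) + #{a | p (some a)} := by
  rw [Set.ncard_eq_toFinset_card', Set.toFinset_ofPred, card_filter, Fintype.sum_option,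
    card_filter]

lemma sum_eq_card_filter_eq_one_add_two_mul {f : α → ℕ} (hf : ∀ x, f x ≤ 2) :
    ∑ x, f x = #{x | f x = 1} + 2 * #{x | f x = 2} := by
  rw [card_filter, card_filter, mul_sum, ← sum_add_distrib]
  refine sum_congr rfl fun x _ => ?_
  have := hf x
  split_ifs <;> omega

lemma card_filter_eq_zero_add_one_add_two {f : α → ℕ} (hf : ∀ x, f x ≤ 2) :
    #{x | f x = 0} + #{x | f x = 1} + #{x | f x = 2} = Fintype.card α := by
  rw [← card_univ, card_filter, card_filter, card_filter, card_eq_sum_ones, ← sum_add_distrib,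
    ← sum_add_distrib]
  refine sum_congr rfl fun x _ => ?_
  have := hf x
  split_ifs <;> omega

lemma SimpleGraph.sum_card_filter_adj_le (H : SimpleGraph α) [DecidableRel H.Adj] {D : ℕ}
    (hD : ∀ v, H.degree v ≤ D) (s : Finset α) : ∑ v, #{w ∈ s | H.Adj v w} ≤ D * #s :=
  calc ∑ v, #{w ∈ s | H.Adj v w} = ∑ w ∈ s, #{v | H.Adj v w} :=
        sum_card_bipartiteAbove_eq_sum_card_bipartiteBelow H.Adj
    _ = ∑ w ∈ s, H.degree w := by
        simp_rw [← card_neighborFinset_eq_degree, neighborFinset_eq_filter, H.adj_comm]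
    _ ≤ ∑ _w ∈ s, D := sum_le_sum fun w _ => hD w
    _ = D * #s := by rw [sum_const, smul_eq_mul, mul_comm]

end Counting

lemma SimpleGraph.cycleGraph_degree_le_two {m : ℕ} (v : Fin m) : (cycleGraph m).degree v ≤ 2 :=
  match m, v with
  | 0, v => v.elim0
  | 1, _ => by simp [cycleGraph_one_eq_bot]
  | _ + 2, _ => cycleGraph_degree_two_le.trans_le card_le_two

lemma IsRkTDF.le_ncard_adj_two_add_one {V : Type*} {G : SimpleGraph V} {k : ℕ} {f : V → ℕ}
    (hf : IsRkTDF G k f) (v : V) :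
    k + (if f v = 0 then 1 else 0) ≤ {w | G.Adj v w ∧ f w = 2}.ncard + 1 := by
  by_cases h : f v = 0
  · simpa [h] using hf.2.1 v h
  · simpa [h] using hf.2.2 v h

section Wheel

variable {m : ℕ}

@[simp] lemma wheel_adj_some_some {i j : Fin m} :
    (wheel m).Adj (some i) (some j) ↔ (cycleGraph m).Adj i j := Iff.rfl

@[simp] lemma wheel_adj_some_none {i : Fin m} : (wheel m).Adj (some i) none := trivial

@[simp] lemma wheel_adj_none_some {j : Fin m} : (wheel m).Adj none (some j) := trivial

lemma ncard_wheel_adj_none (f : Option (Fin m) → ℕ) :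
    {w | (wheel m).Adj none w ∧ f w = 2}.ncard = #{i | f (some i) = 2} := by
  classical
  simp [ncard_setOf_option]

lemma ncard_wheel_adj_some (f : Option (Fin m) → ℕ) (i : Fin m) :
    {w | (wheel m).Adj (some i) w ∧ f w = 2}.ncard =
      (if f none = 2 then 1 else 0) + #{j ∈ {j | f (some j) = 2} | (cycleGraph m).Adj i j} := by
  classical
  simp [ncard_setOf_option, filter_filter, and_comm]

end Wheel

lemma le_sum_of_isRkTDF_wheel {m : ℕ} {f : Option (Fin m) → ℕ} (hf : IsRkTDF (wheel m) 2 f) :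
    (2 * m + 2) / 3 + 2 ≤ ∑ v, f v := by
  have hhub := hf.le_ncard_adj_two_add_one none
  rw [ncard_wheel_adj_none] at hhub
  have hrim : 2 * m + #{i | f (some i) = 0} ≤
      m * (if f none = 2 then 1 else 0) + 2 * #{i | f (some i) = 2} + m :=
    calc 2 * m + #{i | f (some i) = 0} = ∑ i, (2 + if f (some i) = 0 then 1 else 0) := by
          rw [sum_add_distrib, card_filter]; simp [mul_comm]
      _ ≤ ∑ i, ({w | (wheel m).Adj (some i) w ∧ f w = 2}.ncard + 1) :=
          sum_le_sum fun i _ => hf.le_ncard_adj_two_add_one (some i)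
      _ = ∑ i, ((if f none = 2 then 1 else 0) +
            #{j ∈ {j | f (some j) = 2} | (cycleGraph m).Adj i j} + 1) := by
          simp_rw [ncard_wheel_adj_some]
      _ ≤ m * (if f none = 2 then 1 else 0) + 2 * #{i | f (some i) = 2} + m := by
          simp only [sum_add_distrib, sum_const, card_univ, Fintype.card_fin, smul_eq_mul, mul_one]
          have := (cycleGraph m).sum_card_filter_adj_le cycleGraph_degree_le_two
            {j | f (some j) = 2}
          omega
  have hweight := sum_eq_card_filter_eq_one_add_two_mul fun i => hf.1 (some i)
  have hcard := card_filter_eq_zero_add_one_add_two fun i => hf.1 (some i)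
  rw [Fintype.card_fin] at hcard
  have hle := hf.1 none
  rw [Fintype.sum_option]
  split_ifs at hhub hrim <;> omega

-- If `m ≡ 1 [MOD 3]`, the last rim vertex has no rim neighbour labelled 2, so it gets 1.
def rimLabel (m a : ℕ) : ℕ :=
  if a % 3 = 1 then 2 else if a + 1 = m ∧ m % 3 = 1 then 1 else 0

def wheelLabel (m : ℕ) (v : Option (Fin m)) : ℕ :=
  v.elim 2 fun i => rimLabel m i

lemma sum_range_ite_mod_three_eq_one (j : ℕ) :
    ∑ a ∈ range j, (if a % 3 = 1 then 2 else 0) = 2 * ((j + 1) / 3) := by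
  induction j with
  | zero => rfl
  | succ j ih =>
    rw [sum_range_succ, ih]
    split_ifs <;> omega

lemma sum_range_rimLabel (m : ℕ) : ∑ a ∈ range m, rimLabel m a = (2 * m + 2) / 3 := by
  rcases m with _ | m
  · rfl
  have hinit : ∑ a ∈ range m, rimLabel (m + 1) a = ∑ a ∈ range m, (if a % 3 = 1 then 2 else 0) :=
    sum_congr rfl fun a ha => by
      have := mem_range.mp ha
      unfold rimLabel
      split_ifs <;> omega
  rw [sum_range_succ, hinit, sum_range_ite_mod_three_eq_one]
  unfold rimLabel
  split_ifs <;> omega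

lemma sum_wheelLabel (m : ℕ) : ∑ v, wheelLabel m v = (2 * m + 2) / 3 + 2 := by
  rw [Fintype.sum_option, add_comm]
  exact congrArg (· + 2) ((Fin.sum_univ_eq_sum_range (rimLabel m) m).trans (sum_range_rimLabel m))

lemma exists_cycleGraph_adj_rimLabel_eq_two {m : ℕ} {i : Fin m} (hi : rimLabel m i = 0) :
    ∃ j : Fin m, (cycleGraph m).Adj i j ∧ rimLabel m j = 2 := by
  unfold rimLabel at hi
  split_ifs at hi with h1 h2
  have hpath {j : Fin m} (h : (pathGraph m).Adj i j) := pathGraph_le_cycleGraph h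
  by_cases h0 : i.val % 3 = 0
  · refine ⟨⟨i + 1, by omega⟩, hpath (pathGraph_adj.mpr (Or.inl rfl)), ?_⟩
    simp only [rimLabel]
    rw [if_pos (by omega)]
  · refine ⟨⟨i - 1, by omega⟩, hpath (pathGraph_adj.mpr (Or.inr (by simp only; omega))), ?_⟩
    simp only [rimLabel]
    rw [if_pos (by omega)]

lemma isRkTDF_wheelLabel {m : ℕ} (hm : 2 ≤ m) : IsRkTDF (wheel m) 2 (wheelLabel m) := by
  refine ⟨?_, ?_, ?_⟩
  · rintro (_ | i)
    · exact le_rfl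
    · simp only [wheelLabel, Option.elim, rimLabel]
      split_ifs <;> omega
  · rintro (_ | i) hi
    · exact absurd hi two_ne_zero
    · obtain ⟨j, hij, hj⟩ := exists_cycleGraph_adj_rimLabel_eq_two hi
      rw [ncard_wheel_adj_some]
      have : 0 < #{j ∈ {j | wheelLabel m (some j) = 2} | (cycleGraph m).Adj i j} :=
        card_pos.mpr ⟨j, mem_filter.mpr ⟨mem_filter.mpr ⟨mem_univ j, hj⟩, hij⟩⟩
      rw [if_pos (show wheelLabel m none = 2 from rfl)]
      omega
  · rintro (_ | i) -
    · rw [ncard_wheel_adj_none]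
      exact card_pos.mpr ⟨⟨1, hm⟩, by simp [wheelLabel, rimLabel]⟩
    · rw [ncard_wheel_adj_some]
      simp [wheelLabel]

lemma romanKTDN_wheel {m : ℕ} (hm : 2 ≤ m) : romanKTDN (wheel m) 2 = (2 * m + 2) / 3 + 2 :=
  le_antisymm (Nat.sInf_le ⟨_, isRkTDF_wheelLabel hm, sum_wheelLabel m⟩)
    (le_csInf ⟨_, _, isRkTDF_wheelLabel hm, sum_wheelLabel m⟩
      fun _ ⟨_, hf, hsum⟩ => hsum ▸ le_sum_of_isRkTDF_wheel hf)

lemma ceil_two_mul_div_three (m : ℕ) : ⌈(2 * m : ℚ) / 3⌉ = ((2 * m + 2) / 3 : ℕ) := by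
  have h := Rat.ceil_natCast_div_natCast (2 * m) 3
  push_cast at h
  rw [h]
  omega

theorem stmt19 (n : ℕ) (hn : 4 ≤ n) :
    (romanKTDN (wheel (n - 1)) 2 : ℤ) = ⌈(2 * (n - 1 : ℚ)) / 3⌉ + 2 := by
  have hcast : (n - 1 : ℚ) = ((n - 1 : ℕ) : ℚ) := by push_cast [show 1 ≤ n by omega]; ring
  rw [hcast, ceil_two_mul_div_three, romanKTDN_wheel (by omega)]
  push_cast
  rfl
end
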